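/- Suppose ξ ∈ ℝⁿ satisfies the Bethe-type equations e^{2i(m+1)ξ_j} = ((1-q₀e^{iξ_j})/(e^{iξ_j}-q₀))((1-q₁e^{iξ_j})/(e^{iξ_j}-q₁)) Π_{k≠j} ((1-qe^{i(ξ_j+ξ_k)})/(e^{i(ξ_j+ξ_k)}-q))((1-qe^{i(ξ_j-ξ_k)})/(e^{i(ξ_j-ξ_k)}-q)) for j=1,…,n. If μ ∈ ℤⁿ with μ₁ = m+1, then P_{b;μ}(ξ;q,q₀) = q₁ · P_{b;μ-e₁}(ξ;q,q₀). -/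

import Mathlib

noncomputable def Cb (n : ℕ) (q q0 : ℝ) (ξ : Fin n → ℝ) : ℂ :=
  (∏ j : Fin n,
      (1 - (q0 : ℂ) * Complex.exp (-Complex.I * ((ξ j : ℝ) : ℂ))) /
        (1 - Complex.exp (-2 * Complex.I * ((ξ j : ℝ) : ℂ)))) *
    ∏ p ∈ Finset.univ.filter (fun p : Fin n × Fin n => p.1 < p.2),
      ((1 - (q : ℂ) * Complex.exp (-Complex.I * ((ξ p.1 - ξ p.2 : ℝ) : ℂ))) /
          (1 - Complex.exp (-Complex.I * ((ξ p.1 - ξ p.2 : ℝ) : ℂ)))) *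
        ((1 - (q : ℂ) * Complex.exp (-Complex.I * ((ξ p.1 + ξ p.2 : ℝ) : ℂ))) /
          (1 - Complex.exp (-Complex.I * ((ξ p.1 + ξ p.2 : ℝ) : ℂ))))

/-- Hyperoctahedral Hall-Littlewood polynomial: sum over signed permutations. -/
noncomputable def HLb (n : ℕ) (q q0 : ℝ) (μ : Fin n → ℤ) (ξ : Fin n → ℝ) : ℂ :=
  ∑ σ : Equiv.Perm (Fin n), ∑ ε : Fin n → Bool,
    Cb n q q0 (fun j => (if ε j then 1 else -1) * ξ (σ j)) *
      Complex.exp (Complex.I *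
        ∑ j, (((if ε j then (1 : ℝ) else -1) * ξ (σ j) : ℝ) : ℂ) * ((μ j : ℤ) : ℂ))

/-! Fix the permutation `σ` and pair each sign vector `ε` with the one that flips the sign of the
first coordinate `t = ±ξ (σ 0)`. Only the factors of `C_b` that contain `t` and the first exponential
change under the flip, so the two summands of `P_{b;μ} - q₁ P_{b;μ-e₁}` coming from such a pair
combine to `(T t + T (-t)) * (common rest)`, where `T t = c(t) (e^{i(m+1)t} - q₁ e^{imt})` and `c(t)`
is the product of the `t`-dependent factors of `C_b`. Flipping `t` multiplies each such factor by a
scattering factor, and the Bethe equation for `ξ (σ 0)` says exactly that `T (-t) = -T t`. -/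

namespace HyperoctahedralHL

open Finset Complex

noncomputable def expI (t : ℝ) : ℂ := exp (I * t)

noncomputable def cPair (q t : ℝ) : ℂ := (1 - q * exp (-I * t)) / (1 - exp (-I * t))

noncomputable def cBoundary (q0 t : ℝ) : ℂ := (1 - q0 * exp (-I * t)) / (1 - exp (-2 * I * t))

noncomputable def pairFactor (q x y : ℝ) : ℂ := cPair q (x - y) * cPair q (x + y)

noncomputable def scattering (q t : ℝ) : ℂ := (1 - q * expI t) / (expI t - q)

lemma Cb_eq_prod (n : ℕ) (q q0 : ℝ) (z : Fin n → ℝ) :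
    Cb n q q0 z = (∏ j, cBoundary q0 (z j)) *
      ∏ p ∈ univ.filter (fun p : Fin n × Fin n => p.1 < p.2), pairFactor q (z p.1) (z p.2) :=
  rfl

lemma expI_ne_zero (t : ℝ) : expI t ≠ 0 := exp_ne_zero _

lemma expI_neg (t : ℝ) : expI (-t) = (expI t)⁻¹ := by
  rw [expI, expI, ← exp_neg]
  push_cast
  ring_nf

lemma exp_neg_I_mul (t : ℝ) : exp (-I * t) = (expI t)⁻¹ := by
  rw [expI, ← exp_neg]
  ring_nf

lemma exp_neg_two_I_mul (t : ℝ) : exp (-2 * I * t) = (expI t ^ 2)⁻¹ := by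
  rw [expI, ← exp_nat_mul, ← exp_neg]
  push_cast
  ring_nf

lemma exp_I_mul_mul_natCast (t : ℝ) (k : ℕ) : exp (I * (t * k)) = expI t ^ k := by
  rw [expI, ← exp_nat_mul]
  ring_nf

lemma exp_two_I_mul_succ_mul (m : ℕ) (t : ℝ) :
    exp (2 * I * ((m : ℂ) + 1) * t) = expI t ^ (2 * (m + 1)) := by
  rw [expI, ← exp_nat_mul]
  push_cast
  ring_nf

lemma expI_ne_of_scattering_ne_zero {q t : ℝ} (h : scattering q t ≠ 0) : expI t ≠ q :=
  sub_ne_zero.mp (div_ne_zero_iff.mp h).2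

lemma cPair_neg {q t : ℝ} (h : expI t ≠ q) : cPair q (-t) = -scattering q t * cPair q t := by
  have hx := expI_ne_zero t
  have hq : expI t - q ≠ 0 := sub_ne_zero.mpr h
  simp only [cPair, scattering, exp_neg_I_mul, expI_neg, inv_inv]
  by_cases h1 : expI t = 1
  · simp [h1]
  have h1' : 1 - (expI t)⁻¹ ≠ 0 := by rwa [sub_ne_zero, ne_comm, inv_ne_one]
  field_simp
  ring

lemma cBoundary_neg {q0 t : ℝ} (h : expI t ≠ q0) :
    cBoundary q0 (-t) = -(scattering q0 t / expI t) * cBoundary q0 t := by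
  have hx := expI_ne_zero t
  have hq : expI t - q0 ≠ 0 := sub_ne_zero.mpr h
  simp only [cBoundary, scattering, exp_neg_I_mul, exp_neg_two_I_mul, expI_neg, inv_inv, inv_pow]
  by_cases h1 : expI t ^ 2 = 1
  · simp [h1]
  have h1' : 1 - (expI t ^ 2)⁻¹ ≠ 0 := by rwa [sub_ne_zero, ne_comm, inv_ne_one]
  field_simp
  ring

lemma pairFactor_neg_right (q x y : ℝ) : pairFactor q x (-y) = pairFactor q x y := by
  rw [pairFactor, pairFactor, sub_neg_eq_add, ← sub_eq_add_neg, mul_comm]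

lemma pairFactor_neg_left {q x y : ℝ} (hadd : expI (x + y) ≠ q) (hsub : expI (x - y) ≠ q) :
    pairFactor q (-x) y = scattering q (x + y) * scattering q (x - y) * pairFactor q x y := by
  rw [pairFactor, pairFactor, show -x - y = -(x + y) by ring, show -x + y = -(x - y) by ring,
    cPair_neg hadd, cPair_neg hsub]
  ring

section Row

variable (q q0 q1 : ℝ) (m : ℕ) {ι : Type*} (S : Finset ι) (s : ι → ℝ)

noncomputable def rowFactor (t : ℝ) : ℂ := cBoundary q0 t * ∏ k ∈ S, pairFactor q t (s k)

noncomputable def rowTerm (t : ℝ) : ℂ :=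
  rowFactor q q0 S s t * (expI t ^ (m + 1) - q1 * expI t ^ m)

def IsBetheRoot (t : ℝ) : Prop :=
  exp (2 * I * ((m : ℂ) + 1) * t) =
    scattering q0 t * scattering q1 t * ∏ k ∈ S, scattering q (t + s k) * scattering q (t - s k)

variable {q q0 q1 m S s}

lemma rowFactor_neg {t : ℝ} (h₀ : expI t ≠ q0)
    (hS : ∀ k ∈ S, expI (t + s k) ≠ q ∧ expI (t - s k) ≠ q) :
    rowFactor q q0 S s (-t) =
      -(scattering q0 t / expI t * ∏ k ∈ S, scattering q (t + s k) * scattering q (t - s k)) *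
        rowFactor q q0 S s t := by
  rw [rowFactor, rowFactor, cBoundary_neg h₀,
    prod_congr rfl fun k hk => pairFactor_neg_left (hS k hk).1 (hS k hk).2, prod_mul_distrib]
  ring

/-- The left side of a Bethe equation is a nonzero exponential, so no scattering factor vanishes,
and hence (as `x / 0 = 0`) none of their denominators does. -/
lemma IsBetheRoot.expI_ne {t : ℝ} (hB : IsBetheRoot q q0 q1 m S s t) :
    expI t ≠ q0 ∧ expI t ≠ q1 ∧ ∀ k ∈ S, expI (t + s k) ≠ q ∧ expI (t - s k) ≠ q := by
  have hne := hB ▸ exp_ne_zero _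
  simp only [mul_ne_zero_iff, prod_ne_zero_iff] at hne
  obtain ⟨⟨h₀, h₁⟩, hS⟩ := hne
  exact ⟨expI_ne_of_scattering_ne_zero h₀, expI_ne_of_scattering_ne_zero h₁, fun k hk =>
    (hS k hk).imp expI_ne_of_scattering_ne_zero expI_ne_of_scattering_ne_zero⟩

lemma IsBetheRoot.scattering_mul_prod_mul {t : ℝ} (hB : IsBetheRoot q q0 q1 m S s t)
    (h₁ : expI t ≠ q1) :
    scattering q0 t * (∏ k ∈ S, scattering q (t + s k) * scattering q (t - s k)) *
      (1 - q1 * expI t) = expI t ^ (2 * (m + 1)) * (expI t - q1) := by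
  have hG1 : scattering q1 t * (expI t - q1) = 1 - q1 * expI t :=
    div_mul_cancel₀ _ (sub_ne_zero.mpr h₁)
  rw [IsBetheRoot, exp_two_I_mul_succ_mul] at hB
  rw [hB, ← hG1]
  ring

/-- This is the identity `e^{2i(m+1)t} = (C_b(r_b ξ) / C_b(ξ)) (1 - q₁ e^{it}) / (q₁ e^{-it} - 1)`. -/
lemma rowTerm_neg {t : ℝ} (hB : IsBetheRoot q q0 q1 m S s t) :
    rowTerm q q0 q1 m S s (-t) = -rowTerm q q0 q1 m S s t := by
  obtain ⟨h₀, h₁, hS⟩ := hB.expI_ne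
  have hx := expI_ne_zero t
  have hpow : (expI t)⁻¹ ^ (m + 1) - q1 * (expI t)⁻¹ ^ m =
      (1 - q1 * expI t) / expI t ^ (m + 1) := by
    rw [inv_pow, inv_pow]
    field_simp
    ring
  rw [rowTerm, rowTerm, rowFactor_neg h₀ hS, expI_neg, hpow]
  calc _ = -(scattering q0 t * (∏ k ∈ S, scattering q (t + s k) * scattering q (t - s k)) *
          (1 - q1 * expI t)) * rowFactor q q0 S s t / expI t ^ (m + 2) := by
        field_simp
        ring
    _ = _ := by
        rw [hB.scattering_mul_prod_mul h₁]
        field_simp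
        ring

lemma rowTerm_add_rowTerm_neg {t : ℝ} (hB : IsBetheRoot q q0 q1 m S s t) (b : Bool) :
    rowTerm q q0 q1 m S s ((if b then 1 else -1) * t) +
      rowTerm q q0 q1 m S s (-((if b then 1 else -1) * t)) = 0 := by
  cases b <;> simp [rowTerm_neg hB]

end Row

lemma prod_filter_lt_eq_prod_erase_mul {ι M : Type*} [Fintype ι] [LinearOrder ι] [CommMonoid M]
    {j0 : ι} (hj0 : ∀ k, j0 ≤ k) (f : ι × ι → M) :
    ∏ p ∈ univ.filter (fun p : ι × ι => p.1 < p.2), f p =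
      (∏ k ∈ univ.erase j0, f (j0, k)) *
        ∏ p ∈ univ.filter (fun p : ι × ι => p.1 < p.2 ∧ p.1 ≠ j0), f p := by
  rw [← prod_filter_mul_prod_filter_not _ (fun p => p.1 = j0), filter_filter, filter_filter]
  congr 1
  refine prod_nbij' Prod.snd (Prod.mk j0) ?_ ?_ ?_ ?_ ?_ <;>
    simp only [mem_filter, mem_univ, mem_erase, true_and, and_true, Prod.forall]
  · rintro _ k ⟨hk, rfl⟩
    exact hk.ne'
  · exact fun k hk => (hj0 k).lt_of_ne' hk
  · rintro _ _ ⟨-, rfl⟩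
    trivial
  · exact fun _ _ => trivial
  · rintro _ _ ⟨-, rfl⟩
    trivial

section Tail

variable (q q0 : ℝ) {n : ℕ}

noncomputable def cbTail (j0 : Fin n) (z : Fin n → ℝ) : ℂ :=
  (∏ j ∈ univ.erase j0, cBoundary q0 (z j)) *
    ∏ p ∈ univ.filter (fun p : Fin n × Fin n => p.1 < p.2 ∧ p.1 ≠ j0),
      pairFactor q (z p.1) (z p.2)

variable {q q0} {j0 : Fin n}

lemma Cb_eq_rowFactor_mul_cbTail (hj0 : ∀ k, j0 ≤ k) (z : Fin n → ℝ) :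
    Cb n q q0 z = rowFactor q q0 (univ.erase j0) z (z j0) * cbTail q q0 j0 z := by
  rw [Cb_eq_prod, prod_filter_lt_eq_prod_erase_mul hj0, ← mul_prod_erase univ _ (mem_univ j0),
    rowFactor, cbTail]
  ring

lemma cbTail_congr (hj0 : ∀ k, j0 ≤ k) {z z' : Fin n → ℝ} (h : ∀ j ≠ j0, z' j = z j) :
    cbTail q q0 j0 z' = cbTail q q0 j0 z := by
  rw [cbTail, cbTail, prod_congr rfl fun j hj => by rw [h j (ne_of_mem_erase hj)]]
  congr 1
  refine prod_congr rfl fun p hp => ?_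
  obtain ⟨hlt, hne⟩ := (mem_filter.mp hp).2
  rw [h _ hne, h _ (hj0 p.1 |>.trans_lt hlt).ne']

end Tail

lemma exp_I_mul_sum_eq_mul {ι : Type*} [Fintype ι] [DecidableEq ι] (j0 : ι) (z : ι → ℝ)
    (μ : ι → ℤ) :
    exp (I * ∑ j, (z j : ℂ) * (μ j : ℂ)) =
      exp (I * (z j0 * μ j0)) * exp (I * ∑ j ∈ univ.erase j0, (z j : ℂ) * (μ j : ℂ)) := by
  rw [← add_sum_erase _ _ (mem_univ j0), mul_add, exp_add]

lemma Cb_mul_exp_sub_eq_rowTerm_mul {q q0 q1 : ℝ} {m n : ℕ} {j0 : Fin n} (hj0 : ∀ k, j0 ≤ k)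
    (z : Fin n → ℝ) {μ : Fin n → ℤ} (hμ : μ j0 = m + 1) :
    Cb n q q0 z * exp (I * ∑ j, (z j : ℂ) * (μ j : ℂ)) -
        q1 * (Cb n q q0 z *
          exp (I * ∑ j, (z j : ℂ) * ((if j = j0 then μ j - 1 else μ j : ℤ) : ℂ))) =
      rowTerm q q0 q1 m (univ.erase j0) z (z j0) *
        (cbTail q q0 j0 z * exp (I * ∑ j ∈ univ.erase j0, (z j : ℂ) * (μ j : ℂ))) := by
  have hrest :
      ∑ j ∈ univ.erase j0, (z j : ℂ) * ((if j = j0 then μ j - 1 else μ j : ℤ) : ℂ) =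
        ∑ j ∈ univ.erase j0, (z j : ℂ) * (μ j : ℂ) :=
    sum_congr rfl fun j hj => by rw [if_neg (ne_of_mem_erase hj)]
  rw [exp_I_mul_sum_eq_mul j0, exp_I_mul_sum_eq_mul j0, hrest, if_pos rfl, hμ,
    add_sub_cancel_right, show ((m + 1 : ℤ) : ℂ) = ((m + 1 : ℕ) : ℂ) by push_cast; rfl,
    Int.cast_natCast, exp_I_mul_mul_natCast, exp_I_mul_mul_natCast,
    Cb_eq_rowFactor_mul_cbTail hj0, rowTerm]
  ring

section Signed

variable {ι : Type*} [DecidableEq ι]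

def signedComp (ξ : ι → ℝ) (σ : Equiv.Perm ι) (ε : ι → Bool) (j : ι) : ℝ :=
  (if ε j then 1 else -1) * ξ (σ j)

lemma signedComp_update_self (ξ : ι → ℝ) (σ : Equiv.Perm ι) (ε : ι → Bool) (j0 : ι) :
    signedComp ξ σ (Function.update ε j0 (!ε j0)) j0 = -signedComp ξ σ ε j0 := by
  cases h : ε j0 <;> simp [signedComp, h]

lemma signedComp_update_of_ne (ξ : ι → ℝ) (σ : Equiv.Perm ι) (ε : ι → Bool) {j0 j : ι}
    (h : j ≠ j0) (b : Bool) :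
    signedComp ξ σ (Function.update ε j0 b) j = signedComp ξ σ ε j := by
  rw [signedComp, signedComp, Function.update_of_ne h]

lemma rowFactor_signedComp [Fintype ι] (q q0 : ℝ) (ξ : ι → ℝ) (σ : Equiv.Perm ι)
    (ε : ι → Bool) (j0 : ι) (t : ℝ) :
    rowFactor q q0 (univ.erase j0) (signedComp ξ σ ε) t =
      rowFactor q q0 (univ.erase (σ j0)) ξ t := by
  rw [rowFactor, rowFactor]
  congr 1
  refine prod_equiv σ (by simp) fun k _ => ?_
  cases h : ε k <;> simp [signedComp, h, pairFactor_neg_right]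

end Signed

lemma sum_signs_rowTerm_mul_eq_zero {q q0 q1 : ℝ} {m n : ℕ} {j0 : Fin n} (hj0 : ∀ k, j0 ≤ k)
    {ξ : Fin n → ℝ} (σ : Equiv.Perm (Fin n))
    (hB : IsBetheRoot q q0 q1 m (univ.erase (σ j0)) ξ (ξ (σ j0))) (μ : Fin n → ℤ) :
    ∑ ε : Fin n → Bool,
      rowTerm q q0 q1 m (univ.erase j0) (signedComp ξ σ ε) (signedComp ξ σ ε j0) *
        (cbTail q q0 j0 (signedComp ξ σ ε) *
          exp (I * ∑ j ∈ univ.erase j0, (signedComp ξ σ ε j : ℂ) * (μ j : ℂ))) = 0 := by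
  refine sum_involution (fun ε _ => Function.update ε j0 (!ε j0)) (fun ε _ => ?_)
    (fun ε _ _ h => by simpa using congrFun h j0) (fun _ _ => mem_univ _) (fun ε _ => by simp)
  have hoff : ∀ j ≠ j0,
      signedComp ξ σ (Function.update ε j0 (!ε j0)) j = signedComp ξ σ ε j :=
    fun j hj => signedComp_update_of_ne ξ σ ε hj _
  have hrest : ∑ j ∈ univ.erase j0,
        (signedComp ξ σ (Function.update ε j0 (!ε j0)) j : ℂ) * (μ j : ℂ) =
      ∑ j ∈ univ.erase j0, (signedComp ξ σ ε j : ℂ) * (μ j : ℂ) :=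
    sum_congr rfl fun j hj => by rw [hoff j (ne_of_mem_erase hj)]
  rw [signedComp_update_self, cbTail_congr hj0 hoff, hrest, rowTerm, rowTerm,
    rowFactor_signedComp, rowFactor_signedComp, ← rowTerm, ← rowTerm, ← add_mul,
    signedComp, rowTerm_add_rowTerm_neg hB, zero_mul]

end HyperoctahedralHL

theorem HL_affine_straightening_typeB_general (n : ℕ) (hn : 0 < n) (m : ℕ)
    (q q0 q1 : ℝ)
    (ξ : Fin n → ℝ)
    (hBethe : ∀ j : Fin n,
      Complex.exp (2 * Complex.I * ((m : ℂ) + 1) * ((ξ j : ℝ) : ℂ)) =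
        ((1 - (q0 : ℂ) * Complex.exp (Complex.I * ((ξ j : ℝ) : ℂ))) /
            (Complex.exp (Complex.I * ((ξ j : ℝ) : ℂ)) - (q0 : ℂ))) *
          ((1 - (q1 : ℂ) * Complex.exp (Complex.I * ((ξ j : ℝ) : ℂ))) /
            (Complex.exp (Complex.I * ((ξ j : ℝ) : ℂ)) - (q1 : ℂ))) *
          ∏ k ∈ Finset.univ.erase j,
            ((1 - (q : ℂ) * Complex.exp (Complex.I * ((ξ j + ξ k : ℝ) : ℂ))) /
                (Complex.exp (Complex.I * ((ξ j + ξ k : ℝ) : ℂ)) - (q : ℂ))) *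
              ((1 - (q : ℂ) * Complex.exp (Complex.I * ((ξ j - ξ k : ℝ) : ℂ))) /
                (Complex.exp (Complex.I * ((ξ j - ξ k : ℝ) : ℂ)) - (q : ℂ))))
    (μ : Fin n → ℤ) (hμ : μ ⟨0, hn⟩ = (m : ℤ) + 1) :
    HLb n q q0 μ ξ =
      (q1 : ℂ) * HLb n q q0 (fun l => if l = ⟨0, hn⟩ then μ l - 1 else μ l) ξ := by
  have hj0 : ∀ k : Fin n, ⟨0, hn⟩ ≤ k := fun k => Nat.zero_le k
  rw [HLb, HLb, Finset.mul_sum, ← sub_eq_zero, ← Finset.sum_sub_distrib]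
  refine Finset.sum_eq_zero fun σ _ => ?_
  rw [Finset.mul_sum, ← Finset.sum_sub_distrib]
  simp only [HyperoctahedralHL.Cb_mul_exp_sub_eq_rowTerm_mul hj0 _ hμ]
  exact HyperoctahedralHL.sum_signs_rowTerm_mul_eq_zero hj0 σ (hBethe (σ ⟨0, hn⟩)) μ

theorem HL_affine_straightening_typeB (n : ℕ) (hn : 0 < n) (m : ℕ) (hm : 0 < m)
    (q q0 q1 : ℝ) (hq : -1 < q) (hq' : q < 1) (hq0 : -1 < q0) (hq0' : q0 < 1)
    (hq1 : -1 < q1) (hq1' : q1 < 1)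
    (ξ : Fin n → ℝ)
    (hgen1 : ∀ j : Fin n, Complex.exp (2 * Complex.I * ((ξ j : ℝ) : ℂ)) ≠ 1)
    (hgen2 : ∀ l k : Fin n, l ≠ k →
      Complex.exp (Complex.I * ((ξ l - ξ k : ℝ) : ℂ)) ≠ 1 ∧
        Complex.exp (Complex.I * ((ξ l + ξ k : ℝ) : ℂ)) ≠ 1)
    (hBethe : ∀ j : Fin n,
      Complex.exp (2 * Complex.I * ((m : ℂ) + 1) * ((ξ j : ℝ) : ℂ)) =
        ((1 - (q0 : ℂ) * Complex.exp (Complex.I * ((ξ j : ℝ) : ℂ))) /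
            (Complex.exp (Complex.I * ((ξ j : ℝ) : ℂ)) - (q0 : ℂ))) *
          ((1 - (q1 : ℂ) * Complex.exp (Complex.I * ((ξ j : ℝ) : ℂ))) /
            (Complex.exp (Complex.I * ((ξ j : ℝ) : ℂ)) - (q1 : ℂ))) *
          ∏ k ∈ Finset.univ.erase j,
            ((1 - (q : ℂ) * Complex.exp (Complex.I * ((ξ j + ξ k : ℝ) : ℂ))) /
                (Complex.exp (Complex.I * ((ξ j + ξ k : ℝ) : ℂ)) - (q : ℂ))) *
              ((1 - (q : ℂ) * Complex.exp (Complex.I * ((ξ j - ξ k : ℝ) : ℂ))) /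
                (Complex.exp (Complex.I * ((ξ j - ξ k : ℝ) : ℂ)) - (q : ℂ))))
    (μ : Fin n → ℤ) (hμ : μ ⟨0, hn⟩ = (m : ℤ) + 1) :
    HLb n q q0 μ ξ =
      (q1 : ℂ) * HLb n q q0 (fun l => if l = ⟨0, hn⟩ then μ l - 1 else μ l) ξ :=
  HL_affine_straightening_typeB_general n hn m q q0 q1 ξ hBethe μ hμ
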